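/- (i) If τ(−λ) = τ(λ) and a(−λ) = a(λ) for all λ ∈ ℂ∖{0}, then C_{i,j}(−λ) = C_{i,j}(λ) for all i, j ∈ {0,…,p−1} and all λ. (ii) If τ(1/λ) = τ(λ) for all λ ∈ ℂ∖{0}, then C_{0,0}(1/λ) = C_{0,0}(λ) and C_{0,1}(1/λ) = C_{0,p−1}(λ) for all λ at which both sides are defined. -/

import Mathlib

/-!
Part (i) holds entrywise: if `τ` and `a` are even, `D_τ(−λ) = D_τ(λ)`.

For (ii), `q^{−k} = (q^k)⁻¹` makes the reflection `k ↦ −k` of `ℤ/pℤ` conjugate `D_τ(λ)` into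
`D_τ(1/λ)`; it swaps the sub- and superdiagonal. With row and column `0` deleted, the reflection
reverses the remaining indices `1, …, p−1`, so `C_{0,0}` is unchanged. With column `1` deleted
instead, the reflected columns `0, p−2, …, 1` are those of the `(0, p−1)`-minor, reversed and then
rotated; the rotation of `p−1` indices has sign `(−1)^{p−2}`, and `(−1)^1 (−1)^{p−2} = (−1)^{p−1}`.
-/

noncomputable def Dmat (p : ℕ) (q : ℂ) (tau a : ℂ → ℂ) (lam : ℂ) :
    Matrix (ZMod p) (ZMod p) ℂ :=
  Matrix.of fun k l : ZMod p =>
    if l = k then tau (q ^ k.val * lam)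
    else if l = k - 1 then -a (q ^ k.val * lam)
    else if l = k + 1 then -a ((q ^ k.val * lam)⁻¹)
    else 0

def delIdx {p : ℕ} (i : Fin p) (m : Fin (p - 1)) : Fin p :=
  if h : m.val < i.val then ⟨m.val, Nat.lt_trans h i.isLt⟩
  else ⟨m.val + 1, by have h1 := m.isLt; have h2 := i.isLt; omega⟩

noncomputable def DmatFin (p : ℕ) (q : ℂ) (tau a : ℂ → ℂ) (lam : ℂ) :
    Matrix (Fin p) (Fin p) ℂ :=
  (Dmat p q tau a lam).submatrix (fun r : Fin p => (r.val : ZMod p))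
    (fun s : Fin p => (s.val : ZMod p))

noncomputable def cofactor (p : ℕ) (q : ℂ) (tau a : ℂ → ℂ) (i j : Fin p) (lam : ℂ) : ℂ :=
  (-1 : ℂ) ^ (i.val + j.val) *
    ((DmatFin p q tau a lam).submatrix (delIdx i) (delIdx j)).det

open Matrix

lemma IsPrimitiveRoot.pow_val_neg {p : ℕ} [NeZero p] {q : ℂ} (hq : IsPrimitiveRoot q p)
    (k : ZMod p) : q ^ (-k).val = (q ^ k.val)⁻¹ := by
  refine eq_inv_of_mul_eq_one_left ?_
  rw [← pow_add, hq.pow_eq_one_iff_dvd, ← ZMod.natCast_eq_zero_iff]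
  simp

lemma ZMod.neg_natCast_of_add_eq {n x y : ℕ} (h : x + y = n) : -(x : ZMod n) = y := by
  refine neg_eq_of_add_eq_zero_left ?_
  rw [← Nat.cast_add, add_comm, h, ZMod.natCast_self]

lemma ZMod.natCast_ne_zero_of_lt {n a : ℕ} (ha : 0 < a) (h : a < n) : (a : ZMod n) ≠ 0 :=
  fun h0 => absurd (Nat.le_of_dvd ha ((ZMod.natCast_eq_zero_iff a n).1 h0)) (by omega)

section
variable {p : ℕ} {q : ℂ} {tau a : ℂ → ℂ}

lemma Dmat_neg (hq : q ≠ 0) (htau : ∀ lam : ℂ, lam ≠ 0 → tau (-lam) = tau lam)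
    (ha : ∀ lam : ℂ, lam ≠ 0 → a (-lam) = a lam) {lam : ℂ} (hlam : lam ≠ 0) :
    Dmat p q tau a (-lam) = Dmat p q tau a lam := by
  ext k l
  have hx : q ^ k.val * lam ≠ 0 := mul_ne_zero (pow_ne_zero _ hq) hlam
  simp only [Dmat, of_apply, mul_neg, inv_neg, htau _ hx, ha _ hx, ha _ (inv_ne_zero hx)]

lemma Dmat_inv (hq : IsPrimitiveRoot q p) (hp : 3 ≤ p)
    (htau : ∀ lam : ℂ, lam ≠ 0 → tau lam⁻¹ = tau lam) {lam : ℂ} (hlam : lam ≠ 0) :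
    Dmat p q tau a lam⁻¹ = (Dmat p q tau a lam).submatrix (-·) (-·) := by
  have : NeZero p := ⟨by omega⟩
  have h1 : (1 : ZMod p) ≠ 0 := by exact_mod_cast ZMod.natCast_ne_zero_of_lt one_pos (by omega)
  have h2 : (2 : ZMod p) ≠ 0 := by exact_mod_cast ZMod.natCast_ne_zero_of_lt two_pos (by omega)
  ext k l
  have hx : q ^ k.val * lam⁻¹ ≠ 0 :=
    mul_ne_zero (pow_ne_zero _ (hq.ne_zero (by omega))) (inv_ne_zero hlam)
  have hneg : q ^ (-k).val * lam = (q ^ k.val * lam⁻¹)⁻¹ := by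
    rw [hq.pow_val_neg, mul_inv, inv_inv]
  simp only [Dmat, submatrix_apply, of_apply, hneg, inv_inv, neg_inj,
    show -k - 1 = -(k + 1) by ring, show -k + 1 = -(k - 1) by ring, htau _ hx]
  have hk1 : k - 1 ≠ k := fun h => h1 (by linear_combination -h)
  have hk2 : k + 1 ≠ k := fun h => h1 (by linear_combination h)
  have hk3 : k + 1 ≠ k - 1 := fun h => h2 (by linear_combination h)
  split_ifs <;> first | rfl | (subst_vars; simp_all)

end

lemma delIdx_val_of_lt {p : ℕ} {i : Fin p} {m : Fin (p - 1)} (h : m.val < i.val) :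
    (delIdx i m).val = m.val := by
  simp [delIdx, h]

lemma delIdx_val_of_le {p : ℕ} {i : Fin p} {m : Fin (p - 1)} (h : i.val ≤ m.val) :
    (delIdx i m).val = m.val + 1 := by
  simp [delIdx, not_lt.2 h]

def finMinor {R : Type*} {p : ℕ} (M : Matrix (ZMod p) (ZMod p) R) (i j : Fin p) :
    Matrix (Fin (p - 1)) (Fin (p - 1)) R :=
  M.submatrix (fun m => ((delIdx i m).val : ZMod p)) (fun m => ((delIdx j m).val : ZMod p))

lemma cofactor_eq_det_finMinor (p : ℕ) (q : ℂ) (tau a : ℂ → ℂ) (i j : Fin p) (lam : ℂ) :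
    cofactor p q tau a i j lam =
      (-1) ^ (i.val + j.val) * (finMinor (Dmat p q tau a lam) i j).det :=
  rfl

section
variable {n : ℕ}

lemma neg_delIdx_zero (m : Fin (n + 1)) :
    -((delIdx (⟨0, by omega⟩ : Fin (n + 2)) m).val : ZMod (n + 2)) =
      (delIdx (⟨0, by omega⟩ : Fin (n + 2)) m.rev).val := by
  rw [delIdx_val_of_le (Nat.zero_le _), delIdx_val_of_le (Nat.zero_le _), Fin.val_rev]
  exact ZMod.neg_natCast_of_add_eq (by omega)

lemma neg_delIdx_one (m : Fin (n + 1)) :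
    -((delIdx (⟨1, by omega⟩ : Fin (n + 2)) m).val : ZMod (n + 2)) =
      (delIdx (Fin.last (n + 1)) (finRotate (n + 1) m.rev)).val := by
  rw [delIdx_val_of_lt (i := Fin.last (n + 1)) (finRotate (n + 1) m.rev).isLt, coe_finRotate]
  rcases Fin.eq_zero_or_eq_succ m with rfl | ⟨m, rfl⟩
  · rw [delIdx_val_of_lt (show (0 : Fin (n + 1)).val < 1 from Nat.one_pos)]
    simp
  · rw [delIdx_val_of_le (by simp), if_neg (by simp [Fin.rev_eq_iff]), Fin.val_rev]
    exact ZMod.neg_natCast_of_add_eq (by rw [Fin.val_succ]; omega)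

variable {R : Type*} (M : Matrix (ZMod (n + 2)) (ZMod (n + 2)) R)

lemma finMinor_neg_zero_zero :
    finMinor (M.submatrix (-·) (-·)) ⟨0, by omega⟩ ⟨0, by omega⟩ =
      (finMinor M ⟨0, by omega⟩ ⟨0, by omega⟩).submatrix Fin.rev Fin.rev := by
  ext m m'
  simp only [finMinor, submatrix_apply, neg_delIdx_zero]

lemma finMinor_neg_zero_one :
    finMinor (M.submatrix (-·) (-·)) ⟨0, by omega⟩ ⟨1, by omega⟩ =
      (finMinor M ⟨0, by omega⟩ (Fin.last (n + 1))).submatrix Fin.rev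
        (finRotate (n + 1) ∘ Fin.rev) := by
  ext m m'
  simp only [finMinor, submatrix_apply, Function.comp_apply, neg_delIdx_zero, neg_delIdx_one]

variable [CommRing R]

lemma det_finMinor_neg_zero_zero :
    (finMinor (M.submatrix (-·) (-·)) ⟨0, by omega⟩ ⟨0, by omega⟩).det =
      (finMinor M ⟨0, by omega⟩ ⟨0, by omega⟩).det := by
  rw [finMinor_neg_zero_zero]
  exact det_submatrix_equiv_self Fin.revPerm _

lemma det_finMinor_neg_zero_one :
    (finMinor (M.submatrix (-·) (-·)) ⟨0, by omega⟩ ⟨1, by omega⟩).det =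
      (-1) ^ n * (finMinor M ⟨0, by omega⟩ (Fin.last (n + 1))).det := by
  rw [finMinor_neg_zero_one]
  set A : Matrix (Fin (n + 1)) (Fin (n + 1)) R := finMinor M ⟨0, by omega⟩ (Fin.last (n + 1))
  calc (A.submatrix Fin.rev (finRotate (n + 1) ∘ Fin.rev)).det
      = ((A.submatrix id (finRotate (n + 1))).submatrix Fin.revPerm Fin.revPerm).det := rfl
    _ = (-1) ^ n * A.det := by
      rw [det_submatrix_equiv_self, det_permute', sign_finRotate]
      simp

end

section
variable {p : ℕ} {q : ℂ} {tau a : ℂ → ℂ}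

lemma cofactor_neg (hq : q ≠ 0) (htau : ∀ lam : ℂ, lam ≠ 0 → tau (-lam) = tau lam)
    (ha : ∀ lam : ℂ, lam ≠ 0 → a (-lam) = a lam) (i j : Fin p) {lam : ℂ} (hlam : lam ≠ 0) :
    cofactor p q tau a i j (-lam) = cofactor p q tau a i j lam := by
  rw [cofactor_eq_det_finMinor, cofactor_eq_det_finMinor, Dmat_neg hq htau ha hlam]

lemma cofactor_inv_zero_zero {n : ℕ} (hn : 0 < n) (hq : IsPrimitiveRoot q (n + 2))
    (htau : ∀ lam : ℂ, lam ≠ 0 → tau lam⁻¹ = tau lam) {lam : ℂ} (hlam : lam ≠ 0) :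
    cofactor (n + 2) q tau a ⟨0, by omega⟩ ⟨0, by omega⟩ lam⁻¹ =
      cofactor (n + 2) q tau a ⟨0, by omega⟩ ⟨0, by omega⟩ lam := by
  rw [cofactor_eq_det_finMinor, cofactor_eq_det_finMinor, Dmat_inv hq (by omega) htau hlam,
    det_finMinor_neg_zero_zero]

lemma cofactor_inv_zero_one {n : ℕ} (hn : 0 < n) (hq : IsPrimitiveRoot q (n + 2))
    (htau : ∀ lam : ℂ, lam ≠ 0 → tau lam⁻¹ = tau lam) {lam : ℂ} (hlam : lam ≠ 0) :
    cofactor (n + 2) q tau a ⟨0, by omega⟩ ⟨1, by omega⟩ lam⁻¹ =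
      cofactor (n + 2) q tau a ⟨0, by omega⟩ (Fin.last (n + 1)) lam := by
  rw [cofactor_eq_det_finMinor, cofactor_eq_det_finMinor, Dmat_inv hq (by omega) htau hlam,
    det_finMinor_neg_zero_one, ← mul_assoc, ← pow_add, Fin.val_last]
  ring_nf

end

/-- (i) If `τ` and `a` are even then all cofactors of `D_τ` are even:
`C_{i,j}(−λ) = C_{i,j}(λ)`. (ii) If `τ(1/λ) = τ(λ)` then `C_{0,0}(1/λ) = C_{0,0}(λ)`
and `C_{0,1}(1/λ) = C_{0,p−1}(λ)`. -/
theorem stmt_4 (p : ℕ) (hp3 : 3 ≤ p)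
    (q : ℂ) (hq : IsPrimitiveRoot q p)
    (tau a : ℂ → ℂ) :
    ((∀ lam : ℂ, lam ≠ 0 → tau (-lam) = tau lam) →
      (∀ lam : ℂ, lam ≠ 0 → a (-lam) = a lam) →
      ∀ (i j : Fin p) (lam : ℂ), lam ≠ 0 →
        cofactor p q tau a i j (-lam) = cofactor p q tau a i j lam) ∧
    ((∀ lam : ℂ, lam ≠ 0 → tau lam⁻¹ = tau lam) →
      ∀ lam : ℂ, lam ≠ 0 →
        cofactor p q tau a ⟨0, by omega⟩ ⟨0, by omega⟩ lam⁻¹ =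
          cofactor p q tau a ⟨0, by omega⟩ ⟨0, by omega⟩ lam ∧
        cofactor p q tau a ⟨0, by omega⟩ ⟨1, by omega⟩ lam⁻¹ =
          cofactor p q tau a ⟨0, by omega⟩ ⟨p - 1, by omega⟩ lam) := by
  refine ⟨fun htau ha i j _ hlam => cofactor_neg (hq.ne_zero (by omega)) htau ha i j hlam,
    fun htau _ hlam => ?_⟩
  obtain ⟨n, rfl⟩ : ∃ n, p = n + 2 := ⟨p - 2, by omega⟩
  exact ⟨cofactor_inv_zero_zero (by omega) hq htau hlam,
    cofactor_inv_zero_one (by omega) hq htau hlam⟩
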